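/- arXiv:1008.5241 — 3 statements merged into one kernel-verified Lean document; each statement's English description precedes it below -/
import Mathlib

section
/- Let A be a commutative Banach algebra that is topologically generated by its set of idempotent elements (i.e., the closed subalgebra generated by the idempotents is all of A). Then every continuous derivation D : A → X into a commutative Banach A-bimodule X is zero; in particular A is weakly amenable. -/
/-!
If `p` is idempotent and the bimodule is commutative, the Leibniz rule gives `D p = 2 (p • D p)`;
multiplying by `p` once more shows `p • D p = 2 (p • D p)`, so `p • D p = 0` and hence `D p = 0`.
The kernel of a derivation is a subalgebra, and it is closed when `D` is continuous, so it
contains the closed subalgebra generated by the idempotents, which is all of `A`.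
-/

theorem eq_zero_of_leibniz_of_isIdempotentElem {A X F : Type*} [Mul A] [AddCommGroup X]
    [FunLike F X X] [AddMonoidHomClass F X X] (L : A → F) (D : A → X)
    (hL : ∀ a b x, L (a * b) x = L a (L b x)) (hD : ∀ a b, D (a * b) = L a (D b) + L b (D a))
    {p : A} (hp : IsIdempotentElem p) : D p = 0 := by
  have hDp : D p = L p (D p) + L p (D p) := by
    conv_lhs => rw [← hp.eq]
    exact hD p p
  have hfix : L p (L p (D p)) = L p (D p) := by rw [← hL, hp.eq]
  have hzero : L p (D p) = 0 := by
    have h := congrArg (L p) hDp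
    rw [map_add, hfix] at h
    simpa using h
  rw [hDp, hzero, add_zero]

theorem adjoin_subset_ker_of_leibniz {R A X F : Type*} [CommSemiring R]
    [NonUnitalNonAssocSemiring A] [Module R A] [IsScalarTower R A A] [SMulCommClass R A A]
    [AddCommMonoid X] [Module R X] [FunLike F X X] [AddMonoidHomClass F X X]
    (L R' : A → F) (D : A →ₗ[R] X) (hD : ∀ a b, D (a * b) = L a (D b) + R' b (D a))
    {s : Set A} (hs : s ⊆ LinearMap.ker D) :
    (NonUnitalAlgebra.adjoin R s : Set A) ⊆ LinearMap.ker D := by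
  intro a ha
  induction ha using NonUnitalAlgebra.adjoin_induction with
  | mem x hx => exact hs hx
  | add x y _ _ hx hy => exact add_mem hx hy
  | zero => exact zero_mem _
  | mul x y _ _ hx hy =>
    rw [SetLike.mem_coe, LinearMap.mem_ker] at hx hy ⊢
    rw [hD, hx, hy, map_zero, map_zero, add_zero]
  | smul r x _ hx => exact Submodule.smul_mem _ r hx

theorem weakly_amenable_of_generated_by_idempotents_general
    {A : Type*} [NonUnitalNormedCommRing A] [NormedSpace ℂ A]
    [IsScalarTower ℂ A A] [SMulCommClass ℂ A A]
    -- A is topologically generated by its idempotent elements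
    (hgen : closure (NonUnitalAlgebra.adjoin ℂ {p : A | p * p = p} : Set A) = Set.univ) :
    ∀ (X : Type) (_ : NormedAddCommGroup X) (_ : NormedSpace ℂ X) (_ : CompleteSpace X)
      (L R : A →L[ℂ] X →L[ℂ] X),
      (∀ a b x, L (a * b) x = L a (L b x)) →
      (∀ a b x, R (a * b) x = R b (R a x)) →
      (∀ a b x, R b (L a x) = L a (R b x)) →
      -- the bimodule is commutative : a·x = x·a
      (∀ a x, L a x = R a x) →
      ∀ (D : A →L[ℂ] X), (∀ a b, D (a * b) = L a (D b) + R b (D a)) →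
      D = 0 := by
  intro X _ _ _ L R hL _ _ hcomm D hD
  have hD' : ∀ a b, D (a * b) = L a (D b) + L b (D a) := fun a b => by rw [hD, hcomm b]
  have hidem : {p : A | p * p = p} ⊆ LinearMap.ker (D : A →ₗ[ℂ] X) := fun p hp =>
    eq_zero_of_leibniz_of_isIdempotentElem (⇑L) D hL hD' hp
  have hker : closure (NonUnitalAlgebra.adjoin ℂ {p : A | p * p = p} : Set A) ⊆
      LinearMap.ker (D : A →ₗ[ℂ] X) :=
    closure_minimal (adjoin_subset_ker_of_leibniz (⇑L) (⇑R) (D : A →ₗ[ℂ] X) hD hidem)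
      D.isClosed_ker
  ext a
  exact hker (hgen ▸ Set.mem_univ a)

/-- A commutative Banach algebra that is topologically generated by its idempotents
has the property that every continuous derivation into a commutative Banach bimodule
is zero; in particular it is weakly amenable. -/
theorem weakly_amenable_of_generated_by_idempotents
    {A : Type*} [NonUnitalNormedCommRing A] [NormedSpace ℂ A]
    [IsScalarTower ℂ A A] [SMulCommClass ℂ A A] [CompleteSpace A]
    -- A is topologically generated by its idempotent elements
    (hgen : closure (NonUnitalAlgebra.adjoin ℂ {p : A | p * p = p} : Set A) = Set.univ) :
    ∀ (X : Type) (_ : NormedAddCommGroup X) (_ : NormedSpace ℂ X) (_ : CompleteSpace X)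
      (L R : A →L[ℂ] X →L[ℂ] X),
      (∀ a b x, L (a * b) x = L a (L b x)) →
      (∀ a b x, R (a * b) x = R b (R a x)) →
      (∀ a b x, R b (L a x) = L a (R b x)) →
      -- the bimodule is commutative : a·x = x·a
      (∀ a x, L a x = R a x) →
      ∀ (D : A →L[ℂ] X), (∀ a b, D (a * b) = L a (D b) + R b (D a)) →
      D = 0 :=
  weakly_amenable_of_generated_by_idempotents_general hgen
end

section
/- Let N be a bounded normal operator on a Hilbert space H whose spectrum is σ = {0} ∪ {λₙ : n ≥ 1}, where (λₙ) is a sequence of positive reals converging to 0. For each n, let hₙ : σ → ℂ be the function with hₙ(λₙ) = 1/√λₙ and hₙ(z) = 0 for z ≠ λₙ. Then hₙ is continuous on σ and the operator on H ⊕ H given in block form by [[0, hₙ(N)], [0, N^{1/2} hₙ(N)]] is idempotent. -/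
/-!
Away from `0`, the spectrum `{0} ∪ {λₖ}` is discrete: a sequence converging to `0` accumulates
only at `0`, so `λₙ` is an isolated point of `σ` and every function of the form
`z ↦ if z = λₙ then b else c` is continuous on `σ`. By the functional calculus,
`N^{1/2} hₙ(N)` is `eₙ(N)` for the indicator `eₙ` of `{λₙ}`, since `λₙ^{1/2} · λₙ^{-1/2} = 1`;
hence `hₙ(N) · N^{1/2} hₙ(N) = (hₙ eₙ)(N) = hₙ(N)` and `eₙ(N)² = eₙ(N)`, which is exactly
what idempotence of `[[0, B], [0, D]]` requires.
-/

open ContinuousLinearMap in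
/-- The block operator `[[A, B], [C, D]]` on `H ⊕ H`. -/
noncomputable def blockOp {H : Type*} [NormedAddCommGroup H] [InnerProductSpace ℂ H]
    (A B C D : H →L[ℂ] H) : (H × H) →L[ℂ] (H × H) :=
  (A.comp (fst ℂ H H) + B.comp (snd ℂ H H)).prod (C.comp (fst ℂ H H) + D.comp (snd ℂ H H))

open Filter Set Topology

theorem Filter.Tendsto.nhdsWithin_insert_range_diff_singleton_eq_bot
    {ι X : Type*} [TopologicalSpace X] [T2Space X] {u : ι → X} {x₀ a : X}
    (hu : Tendsto u cofinite (𝓝 x₀)) (ha : a ≠ x₀) :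
    𝓝[insert x₀ (range u) \ {a}] a = ⊥ := by
  obtain ⟨U, hU, V, hV, hUV⟩ := Filter.disjoint_iff.mp (disjoint_nhds_nhds.mpr ha.symm)
  set F := u '' {k | u k ∉ U} \ {a}
  have hF : Fᶜ ∈ 𝓝 a :=
    (((hu hU).image u).sdiff).isClosed.compl_mem_nhds fun h => h.2 rfl
  rw [nhdsWithin, inf_principal_eq_bot]
  filter_upwards [hV, hF] with z hzV hzF ⟨hzS, hza⟩
  rcases hzS with rfl | ⟨k, rfl⟩
  · exact hUV.ne_of_mem (mem_of_mem_nhds hU) hzV rfl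
  · by_cases hk : u k ∈ U
    · exact hUV.ne_of_mem hk hzV rfl
    · exact hzF ⟨mem_image_of_mem u hk, hza⟩

theorem continuousOn_ite_eq_of_nhdsWithin_diff_singleton_eq_bot
    {X Y : Type*} [TopologicalSpace X] [T1Space X] [DecidableEq X] [TopologicalSpace Y]
    {s : Set X} {a : X} (ha : 𝓝[s \ {a}] a = ⊥) (b c : Y) :
    ContinuousOn (fun z => if z = a then b else c) s := by
  intro x _
  by_cases hx : x = a
  · subst hx
    have : ∀ᶠ z in 𝓝[s] x, z = x := by
      rw [nhdsWithin, inf_principal_eq_bot] at ha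
      filter_upwards [mem_nhdsWithin_of_mem_nhds ha, self_mem_nhdsWithin] with z hz hzs
      by_contra h
      exact hz ⟨hzs, h⟩
    exact (continuousWithinAt_const (b := b)).congr_of_eventuallyEq
      (this.mono fun z hz => if_pos hz) (if_pos rfl)
  · exact (continuousWithinAt_const (b := c)).congr_of_eventuallyEq
      ((eventually_ne_nhdsWithin hx).mono fun z hz => if_neg hz) (if_neg hx)

theorem blockOp_mul_blockOp {H : Type*} [NormedAddCommGroup H] [InnerProductSpace ℂ H]
    (A B C D A' B' C' D' : H →L[ℂ] H) :
    blockOp A B C D * blockOp A' B' C' D' =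
      blockOp (A * A' + B * C') (A * B' + B * D') (C * A' + D * C') (C * B' + D * D') := by
  ext v <;> simp [blockOp]

theorem isIdempotentElem_blockOp_zero_zero {H : Type*} [NormedAddCommGroup H]
    [InnerProductSpace ℂ H] {B D : H →L[ℂ] H} (hB : B * D = B) (hD : IsIdempotentElem D) :
    IsIdempotentElem (blockOp 0 B 0 D) := by
  rw [IsIdempotentElem, blockOp_mul_blockOp, hB, hD.eq]
  simp

theorem Complex.ofReal_cpow_half_mul_inv_sqrt {x : ℝ} (hx : 0 < x) :
    (x : ℂ) ^ (1 / 2 : ℂ) * ((Real.sqrt x)⁻¹ : ℂ) = 1 := by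
  rw [show (1 / 2 : ℂ) = ((1 / 2 : ℝ) : ℂ) by norm_num, ← Complex.ofReal_cpow hx.le,
    ← Real.sqrt_eq_rpow]
  exact mul_inv_cancel₀ (by exact_mod_cast (Real.sqrt_pos.mpr hx).ne')

theorem Complex.continuousOn_cpow_const_of_re_nonneg {s : Set ℂ} {w : ℂ}
    (hs : ∀ z ∈ s, 0 ≤ z.re) (hw : 0 < w.re) : ContinuousOn (fun z : ℂ => z ^ w) s :=
  fun z hz => (continuousAt_cpow_const_of_re_pos (Or.inl (hs z hz)) hw).continuousWithinAt

/-- For a bounded normal operator `N` with spectrum `{0} ∪ {λₙ}`, `λₙ > 0`, `λₙ → 0`,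
the function `hₙ` equal to `1/√λₙ` at `λₙ` and `0` elsewhere is continuous on the spectrum,
and the block operator `[[0, hₙ(N)], [0, N^{1/2} hₙ(N)]]` is idempotent. -/
theorem block_hn_idempotent
    {H : Type*} [NormedAddCommGroup H] [InnerProductSpace ℂ H] [CompleteSpace H]
    (l : ℕ → ℝ) (hpos : ∀ n, 0 < l n)
    (hlim : Filter.Tendsto l Filter.atTop (nhds 0))
    (N : H →L[ℂ] H) (hN : IsStarNormal N)
    (hspec : spectrum ℂ N = insert (0 : ℂ) (Set.range fun n => (l n : ℂ)))
    (n : ℕ) :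
    ContinuousOn (fun z : ℂ => if z = (l n : ℂ) then ((Real.sqrt (l n))⁻¹ : ℂ) else 0)
      (spectrum ℂ N) ∧
    (let sqrtN : H →L[ℂ] H := cfc (fun z : ℂ => z ^ (1/2 : ℂ)) N
     let hnN : H →L[ℂ] H :=
       cfc (fun z : ℂ => if z = (l n : ℂ) then ((Real.sqrt (l n))⁻¹ : ℂ) else 0) N
     let P := blockOp 0 hnN 0 (sqrtN * hnN)
     P * P = P) := by
  have hl : Tendsto (fun k => (l k : ℂ)) cofinite (𝓝 0) := by
    rw [Nat.cofinite_eq_atTop]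
    exact Complex.continuous_ofReal.tendsto' 0 0 Complex.ofReal_zero |>.comp hlim
  have hiso : 𝓝[spectrum ℂ N \ {(l n : ℂ)}] (l n : ℂ) = ⊥ := by
    rw [hspec]
    exact hl.nhdsWithin_insert_range_diff_singleton_eq_bot (by exact_mod_cast (hpos n).ne')
  have hh := continuousOn_ite_eq_of_nhdsWithin_diff_singleton_eq_bot hiso
    ((Real.sqrt (l n))⁻¹ : ℂ) 0
  refine ⟨hh, ?_⟩
  intro sqrtN hnN P
  have hsqrt : ContinuousOn (fun z : ℂ => z ^ (1 / 2 : ℂ)) (spectrum ℂ N) := by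
    refine Complex.continuousOn_cpow_const_of_re_nonneg ?_ (by norm_num)
    rw [hspec]
    rintro _ (rfl | ⟨k, rfl⟩)
    exacts [le_rfl, (hpos k).le]
  have he := continuousOn_ite_eq_of_nhdsWithin_diff_singleton_eq_bot hiso (1 : ℂ) 0
  have hsqrt_mul : sqrtN * hnN = cfc (fun z : ℂ => if z = (l n : ℂ) then 1 else 0) N := by
    rw [← cfc_mul _ _ N hsqrt hh]
    congr 1 with z
    split_ifs with hz
    · rw [hz, Complex.ofReal_cpow_half_mul_inv_sqrt (hpos n)]
    · exact mul_zero _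
  show IsIdempotentElem (blockOp 0 hnN 0 (sqrtN * hnN))
  rw [hsqrt_mul]
  refine isIdempotentElem_blockOp_zero_zero ?_ ?_
  · rw [← cfc_mul _ _ N hh he]
    congr 1 with z
    split_ifs <;> simp
  · rw [IsIdempotentElem, ← cfc_mul _ _ N he he]
    congr 1 with z
    split_ifs <;> simp
end

section
/- Let σ ⊆ [0, ∞) be compact with 0 ∈ σ. Suppose (qₖ) is a sequence in C(σ) with supₖ ‖qₖ‖∞ ≤ M and ‖z·qₖ(z) − z‖∞ → 0 on σ. Then for every f ∈ C(σ) with f(0) = 0, ‖f·qₖ − f‖∞ → 0. -/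
open Filter Topology

/-! The `a` with `a * qₖ → a` form a left ideal, which is closed because the `qₖ` are uniformly
bounded. In `C(σ, ℂ)` it contains `z`, hence the closure of the ideal generated by `z`, and on a
compact space that closure consists of all functions vanishing on the zero set `{0}` of `z`. -/

section ApproxUnit

variable {A ι : Type*}

def approxUnitIdeal [Ring A] [TopologicalSpace A] [IsTopologicalRing A]
    (q : ι → A) (l : Filter ι) : Ideal A where
  carrier := {a | Tendsto (fun i => a * q i) l (𝓝 a)}
  add_mem' ha hb := by simpa only [Set.mem_ofPred_eq, add_mul] using ha.add hb
  zero_mem' := by simpa only [Set.mem_ofPred_eq, zero_mul] using tendsto_const_nhds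
  smul_mem' c _ ha := by
    simpa only [Set.mem_ofPred_eq, smul_eq_mul, mul_assoc] using ha.const_mul c

theorem isClosed_approxUnitIdeal [SeminormedRing A] {q : ι → A} {M : ℝ} (hq : ∀ i, ‖q i‖ ≤ M)
    (l : Filter ι) : IsClosed (approxUnitIdeal q l : Set A) := by
  have hlip : ∀ i, LipschitzWith M.toNNReal (AddMonoidHom.mulRight (q i)) := fun i =>
    AddMonoidHomClass.lipschitz_of_bound _ M fun a =>
      (norm_mul_le a (q i)).trans (by rw [mul_comm]; gcongr; exact hq i)
  exact (LipschitzWith.uniformEquicontinuous _ _ hlip).equicontinuous.isClosed_setOfPred_tendsto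
    continuous_id

end ApproxUnit

theorem ContinuousMap.mem_closure_span_singleton_of_forall_eq_zero {X 𝕜 : Type*} [RCLike 𝕜]
    [TopologicalSpace X] [CompactSpace X] [T2Space X] {f g : C(X, 𝕜)}
    (hf : ∀ x, g x = 0 → f x = 0) : f ∈ (Ideal.span {g}).closure := by
  rw [← idealOfSet_ofIdeal_eq_closure]
  intro x hx
  exact hf x (notMem_setOfIdeal.mp hx (Ideal.mem_span_singleton_self g))

theorem mul_approx_identity_on_sigma_general
    (σ : Set ℝ) (hσ : IsCompact σ) (hσ0 : (0 : ℝ) ∈ σ)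
    (q : ℕ → C(↥σ, ℂ)) (M : ℝ) (hbdd : ∀ k, ∀ x : ↥σ, ‖q k x‖ ≤ M)
    (happrox : TendstoUniformly (fun k (x : ↥σ) => ((x : ℝ) : ℂ) * q k x)
      (fun x : ↥σ => ((x : ℝ) : ℂ)) atTop) :
    ∀ f : C(↥σ, ℂ), f ⟨0, hσ0⟩ = 0 →
      TendstoUniformly (fun k (x : ↥σ) => f x * q k x) (fun x => f x) atTop := by
  have : CompactSpace σ := isCompact_iff_compactSpace.mp hσ
  have : Nonempty σ := ⟨⟨0, hσ0⟩⟩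
  intro f hf0
  let z : C(σ, ℂ) := ⟨fun x => ((x : ℝ) : ℂ), by fun_prop⟩
  have hz : z ∈ approxUnitIdeal q atTop := ContinuousMap.tendsto_iff_tendstoUniformly.mpr happrox
  have hf : f ∈ (Ideal.span {z}).closure :=
    ContinuousMap.mem_closure_span_singleton_of_forall_eq_zero fun x hx => by
      obtain rfl : x = ⟨0, hσ0⟩ := Subtype.ext (by simpa [z] using hx)
      exact hf0
  have hclosed : IsClosed (approxUnitIdeal q atTop : Set C(σ, ℂ)) :=
    isClosed_approxUnitIdeal (fun k => (ContinuousMap.norm_le_of_nonempty _).mpr (hbdd k)) atTop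
  have hsub : (Ideal.span {z}).closure ≤ approxUnitIdeal q atTop :=
    closure_minimal (Ideal.span_le.mpr (Set.singleton_subset_iff.mpr hz)) hclosed
  exact ContinuousMap.tendsto_iff_tendstoUniformly.mp (hsub hf)

/-- Let `σ ⊆ [0, ∞)` be compact with `0 ∈ σ`. If `(qₖ)` in `C(σ, ℂ)` is uniformly bounded
and `z qₖ(z) → z` uniformly on `σ`, then `f qₖ → f` uniformly for every `f ∈ C(σ, ℂ)` with
`f(0) = 0`. -/
theorem mul_approx_identity_on_sigma
    (σ : Set ℝ) (hσ : IsCompact σ) (hσ0 : (0 : ℝ) ∈ σ) (hσpos : ∀ x ∈ σ, 0 ≤ x)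
    (q : ℕ → C(↥σ, ℂ)) (M : ℝ) (hbdd : ∀ k, ∀ x : ↥σ, ‖q k x‖ ≤ M)
    (happrox : TendstoUniformly (fun k (x : ↥σ) => ((x : ℝ) : ℂ) * q k x)
      (fun x : ↥σ => ((x : ℝ) : ℂ)) atTop) :
    ∀ f : C(↥σ, ℂ), f ⟨0, hσ0⟩ = 0 →
      TendstoUniformly (fun k (x : ↥σ) => f x * q k x) (fun x => f x) atTop :=
  mul_approx_identity_on_sigma_general σ hσ hσ0 q M hbdd happrox
end
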